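/- arXiv:1005.5275 — 3 statements merged into one kernel-verified Lean document; each statement's English description precedes it below -/
import Mathlib

section
/- For any δ > -1, any t_n > 0, and any n ≥ 2, ∫_{0 < t_1 < ⋯ < t_{n-1} < t_n} ∏_{j=1}^{n-1} (t_{j+1} - t_j)^δ dt_1 ⋯ dt_{n-1} = Γ(1+δ)^{n-1} / Γ((n-1)(1+δ) + 1) · t_n^{(n-1)(1+δ)}. -/
/-!
Slice the simplex `{0 < t₁ < ⋯ < t_{m+1} < T}` by its last coordinate `s = t_{m+1}`: the slice is
the simplex of size `m` below `s`, and the integrand factors as `(T - s)^δ` times the integrand on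
that smaller simplex. By induction on `m` (with Tonelli, working with lower Lebesgue integrals so
that no integrability has to be checked), each step is the Beta integral
`∫₀^T s^{m(1+δ)} (T - s)^δ ds = B(m(1+δ) + 1, 1 + δ) T^{(m+1)(1+δ)}`, and the Gamma factors
telescope.
-/

open MeasureTheory Real Set
open scoped ENNReal

theorem lintegral_Ioo_zero_one_rpow_mul_one_sub_rpow {p q : ℝ} (hp : 0 < p) (hq : 0 < q) :
    ∫⁻ x in Ioo 0 1, ENNReal.ofReal (x ^ (p - 1) * (1 - x) ^ (q - 1))
      = ENNReal.ofReal (Gamma p * Gamma q / Gamma (p + q)) := by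
  have hB := ProbabilityTheory.beta_pos hp hq
  have h := ProbabilityTheory.lintegral_betaPDF_eq_one hp hq
  rw [ProbabilityTheory.lintegral_betaPDF] at h
  simp_rw [mul_assoc, ENNReal.ofReal_mul (one_div_pos.2 hB).le] at h
  rw [lintegral_const_mul' _ _ ENNReal.ofReal_ne_top,
    ← ENNReal.eq_div_iff (by simpa) ENNReal.ofReal_ne_top, ← ENNReal.ofReal_one,
    ← ENNReal.ofReal_div_of_pos (by positivity), one_div_one_div] at h
  exact h

theorem lintegral_Ioo_rpow_mul_sub_rpow {p q T : ℝ} (hp : 0 < p) (hq : 0 < q) (hT : 0 < T) :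
    ∫⁻ s in Ioo 0 T, ENNReal.ofReal (s ^ (p - 1) * (T - s) ^ (q - 1))
      = ENNReal.ofReal (Gamma p * Gamma q / Gamma (p + q) * T ^ (p + q - 1)) := by
  have himage : (T * ·) '' Ioo 0 1 = Ioo 0 T := by
    rw [image_mul_left_Ioo hT, mul_zero, mul_one]
  have hscale : ∀ x ∈ Ioo (0 : ℝ) 1, ENNReal.ofReal |T| *
      ENNReal.ofReal ((T * x) ^ (p - 1) * (T - T * x) ^ (q - 1))
        = ENNReal.ofReal (T ^ (p + q - 1)) * ENNReal.ofReal (x ^ (p - 1) * (1 - x) ^ (q - 1)) := by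
    rintro x ⟨hx0, hx1⟩
    rw [abs_of_pos hT, ← ENNReal.ofReal_mul hT.le, ← ENNReal.ofReal_mul (by positivity)]
    congr 1
    rw [show T - T * x = T * (1 - x) by ring, mul_rpow hT.le hx0.le,
      mul_rpow hT.le (by linarith), show p + q - 1 = 1 + (p - 1) + (q - 1) by ring,
      rpow_add hT, rpow_add hT, rpow_one]
    ring
  rw [← himage, lintegral_image_eq_lintegral_abs_deriv_mul measurableSet_Ioo (f' := fun _ => T)
      (fun x _ => by simpa using ((hasDerivAt_id' x).const_mul T).hasDerivWithinAt)
      (mul_right_injective₀ hT.ne').injOn,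
    setLIntegral_congr_fun measurableSet_Ioo hscale,
    lintegral_const_mul' _ _ ENNReal.ofReal_ne_top,
    lintegral_Ioo_zero_one_rpow_mul_one_sub_rpow hp hq, ← ENNReal.ofReal_mul (by positivity),
    mul_comm]

theorem lintegral_eq_lintegral_snoc {α : Type*} [MeasureSpace α]
    [SigmaFinite (volume : Measure α)] {m : ℕ} {f : (Fin (m + 1) → α) → ℝ≥0∞} (hf : Measurable f) :
    ∫⁻ t, f t = ∫⁻ s, ∫⁻ u, f (Fin.snoc u s) := by
  let e := MeasurableEquiv.piFinSuccAbove (fun _ : Fin (m + 1) => α) (Fin.last m)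
  rw [← ((volume_preserving_piFinSuccAbove _ (Fin.last m)).symm e).map_eq, lintegral_map_equiv,
    Measure.volume_eq_prod,
    lintegral_prod (fun p => f (e.symm p)) (hf.comp e.symm.measurable).aemeasurable]
  simp only [MeasurableEquiv.piFinSuccAbove_symm_apply, Fin.insertNthEquiv_last, e]
  rfl

def orderedSimplex (m : ℕ) (T : ℝ) : Set (Fin m → ℝ) :=
  {t | (∀ i, 0 < t i) ∧ (∀ i, t i < T) ∧ StrictMono t}

theorem measurableSet_orderedSimplex (m : ℕ) (T : ℝ) : MeasurableSet (orderedSimplex m T) := by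
  simp only [orderedSimplex, StrictMono, ofPred_and, ofPred_forall]
  exact (MeasurableSet.iInter fun i => measurableSet_lt measurable_const (measurable_pi_apply i)).inter
    ((MeasurableSet.iInter fun i => measurableSet_lt (measurable_pi_apply i) measurable_const).inter
      (MeasurableSet.iInter fun a => MeasurableSet.iInter fun b => MeasurableSet.iInter fun _ =>
        measurableSet_lt (measurable_pi_apply a) (measurable_pi_apply b)))

theorem strictMono_snoc_iff {α : Type*} [Preorder α] {m : ℕ} {s : α} {u : Fin m → α} :
    StrictMono (Fin.snoc u s : Fin (m + 1) → α) ↔ StrictMono u ∧ ∀ i, u i < s := by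
  simp [← Fin.insertNth_last', Fin.strictMono_insertNth_iff, Fin.castSucc_lt_last]

theorem snoc_mem_orderedSimplex_iff {m : ℕ} {T s : ℝ} {u : Fin m → ℝ} :
    (Fin.snoc u s : Fin (m + 1) → ℝ) ∈ orderedSimplex (m + 1) T ↔
      s ∈ Ioo 0 T ∧ u ∈ orderedSimplex m s := by
  simp only [orderedSimplex, mem_ofPred_eq, Fin.forall_fin_succ', Fin.snoc_castSucc,
    Fin.snoc_last, strictMono_snoc_iff, mem_Ioo]
  constructor
  · rintro ⟨⟨hu0, hs0⟩, ⟨-, hsT⟩, hu, hus⟩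
    exact ⟨⟨hs0, hsT⟩, hu0, hus, hu⟩
  · rintro ⟨⟨hs0, hsT⟩, hu0, hus, hu⟩
    exact ⟨⟨hu0, hs0⟩, ⟨fun i => (hus i).trans hsT, hsT⟩, hu, hus⟩

theorem setLIntegral_orderedSimplex_succ {m : ℕ} {T : ℝ} {f : (Fin (m + 1) → ℝ) → ℝ≥0∞}
    (hf : Measurable f) :
    ∫⁻ t in orderedSimplex (m + 1) T, f t
      = ∫⁻ s in Ioo 0 T, ∫⁻ u in orderedSimplex m s, f (Fin.snoc u s) := by
  rw [← lintegral_indicator (measurableSet_orderedSimplex _ _),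
    lintegral_eq_lintegral_snoc (hf.indicator (measurableSet_orderedSimplex _ _)),
    ← lintegral_indicator measurableSet_Ioo]
  refine lintegral_congr fun s => ?_
  by_cases hs : s ∈ Ioo 0 T
  · rw [indicator_of_mem hs, ← lintegral_indicator (measurableSet_orderedSimplex _ _)]
    congr 1 with u
    by_cases hu : u ∈ orderedSimplex m s <;>
      simp [indicator, snoc_mem_orderedSimplex_iff, hs, hu]
  · simp [indicator, snoc_mem_orderedSimplex_iff, hs]

noncomputable def gapProduct (δ T : ℝ) {m : ℕ} (t : Fin m → ℝ) : ℝ :=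
  ∏ j : Fin m, ((if hj : (j : ℕ) + 1 < m then t ⟨(j : ℕ) + 1, hj⟩ else T) - t j) ^ δ

theorem measurable_gapProduct (δ T : ℝ) (m : ℕ) : Measurable (gapProduct δ T (m := m)) :=
  Finset.measurable_prod _ fun j _ =>
    ((by split_ifs <;> fun_prop : Measurable fun t : Fin m → ℝ =>
      if hj : (j : ℕ) + 1 < m then t ⟨(j : ℕ) + 1, hj⟩ else T).sub
        (measurable_pi_apply j)).pow_const δ

theorem gapProduct_eq_prod_snoc (δ T : ℝ) {m : ℕ} (t : Fin m → ℝ) :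
    gapProduct δ T t = ∏ j : Fin m, ((Fin.snoc t T : Fin (m + 1) → ℝ) j.succ - t j) ^ δ := by
  refine Finset.prod_congr rfl fun j _ => ?_
  split_ifs with hj
  · rw [show j.succ = Fin.castSucc ⟨j + 1, hj⟩ from rfl, Fin.snoc_castSucc]
  · rw [show j.succ = Fin.last m from Fin.ext (by simp; omega), Fin.snoc_last]

theorem gapProduct_snoc (δ T s : ℝ) {m : ℕ} (u : Fin m → ℝ) :
    gapProduct δ T (Fin.snoc u s : Fin (m + 1) → ℝ) = gapProduct δ s u * (T - s) ^ δ := by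
  simp only [gapProduct_eq_prod_snoc, Fin.prod_univ_castSucc, Fin.succ_castSucc,
    Fin.snoc_castSucc, Fin.succ_last, Fin.snoc_last]

theorem gapProduct_nonneg (δ : ℝ) {m : ℕ} {T : ℝ} {t : Fin m → ℝ}
    (ht : t ∈ orderedSimplex m T) : 0 ≤ gapProduct δ T t := by
  have hmono : StrictMono (Fin.snoc t T : Fin (m + 1) → ℝ) :=
    strictMono_snoc_iff.2 ⟨ht.2.2, ht.2.1⟩
  rw [gapProduct_eq_prod_snoc]
  refine Finset.prod_nonneg fun j _ => rpow_nonneg (sub_nonneg.2 ?_) δ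
  simpa using (hmono Fin.castSucc_lt_succ).le

theorem lintegral_orderedSimplex_gapProduct {δ : ℝ} (hδ : -1 < δ) (m : ℕ) {T : ℝ} (hT : 0 < T) :
    ∫⁻ t in orderedSimplex m T, ENNReal.ofReal (gapProduct δ T t)
      = ENNReal.ofReal (Gamma (1 + δ) ^ m / Gamma (m * (1 + δ) + 1) * T ^ (m * (1 + δ))) := by
  have hα : 0 < 1 + δ := by linarith
  induction m generalizing T with
  | zero =>
    have : orderedSimplex 0 T = univ :=
      eq_univ_of_forall fun t => ⟨finZeroElim, finZeroElim, Subsingleton.strictMono t⟩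
    simp [this, gapProduct, volume_pi]
  | succ m ih =>
    set C := Gamma (1 + δ) ^ m / Gamma (m * (1 + δ) + 1)
    have hC : 0 ≤ C := by positivity
    have hslice : ∀ s ∈ Ioo 0 T,
        ∫⁻ u in orderedSimplex m s, ENNReal.ofReal (gapProduct δ T (Fin.snoc u s))
          = ENNReal.ofReal C * ENNReal.ofReal (s ^ (m * (1 + δ)) * (T - s) ^ δ) := by
      rintro s ⟨hs, -⟩
      rw [setLIntegral_congr_fun (measurableSet_orderedSimplex m s) fun u hu => by
          rw [gapProduct_snoc, ENNReal.ofReal_mul (gapProduct_nonneg δ hu)],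
        lintegral_mul_const' _ _ ENNReal.ofReal_ne_top, ih hs,
        ← ENNReal.ofReal_mul (by positivity), ← ENNReal.ofReal_mul hC, mul_assoc]
    have hbeta := lintegral_Ioo_rpow_mul_sub_rpow (p := m * (1 + δ) + 1) (q := 1 + δ)
      (by positivity) hα hT
    rw [add_sub_cancel_right, add_sub_cancel_left] at hbeta
    rw [setLIntegral_orderedSimplex_succ (measurable_gapProduct δ T _).ennreal_ofReal,
      setLIntegral_congr_fun measurableSet_Ioo hslice,
      lintegral_const_mul' _ _ ENNReal.ofReal_ne_top, hbeta, ← ENNReal.ofReal_mul hC]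
    congr 1
    rw [show (m : ℝ) * (1 + δ) + 1 + (1 + δ) = ((m + 1 : ℕ) : ℝ) * (1 + δ) + 1 by push_cast; ring,
      add_sub_cancel_right]
    have hΓ : Gamma (m * (1 + δ) + 1) ≠ 0 := (Gamma_pos_of_pos (by positivity)).ne'
    simp only [C]
    field_simp
    ring

/-- For `δ > -1`, `t_n > 0` and `n ≥ 2`, the integral over the ordered simplex
`{0 < t_1 < ⋯ < t_{n-1} < t_n}` of `∏_{j=1}^{n-1} (t_{j+1}-t_j)^δ` (with `t_n` the
fixed upper endpoint) equals `Γ(1+δ)^{n-1}/Γ((n-1)(1+δ)+1) · t_n^{(n-1)(1+δ)}`. -/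
theorem ordered_simplex_integral (n : ℕ) (hn : 2 ≤ n) (δ : ℝ) (hδ : -1 < δ)
    (tn : ℝ) (htn : 0 < tn) :
    (∫ t in {t : Fin (n - 1) → ℝ | (∀ i, 0 < t i) ∧ (∀ i, t i < tn) ∧ StrictMono t},
        ∏ j : Fin (n - 1),
          ((if hj : (j : ℕ) + 1 < n - 1 then t ⟨(j : ℕ) + 1, hj⟩ else tn) - t j) ^ δ)
      = Real.Gamma (1 + δ) ^ (n - 1) / Real.Gamma ((n - 1) * (1 + δ) + 1)
          * tn ^ (((n : ℝ) - 1) * (1 + δ)) := by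
  change ∫ t in orderedSimplex (n - 1) tn, gapProduct δ tn t = _
  have hα : 0 < 1 + δ := by linarith
  rw [integral_eq_lintegral_of_nonneg_ae
      (ae_restrict_of_forall_mem (measurableSet_orderedSimplex _ _) fun _ => gapProduct_nonneg δ)
      (measurable_gapProduct δ tn _).aestronglyMeasurable,
    lintegral_orderedSimplex_gapProduct hδ (n - 1) htn, ENNReal.toReal_ofReal (by positivity),
    Nat.cast_sub (by omega : 1 ≤ n), Nat.cast_one]
end

section
/- For every a > 0 there exists λ > 1 such that for all n ≥ 1, λ^{-n} (n!)^a ≤ Γ(an+1) ≤ λ^n (n!)^a. -/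
set_option maxHeartbeats 1000000


open Real

private lemma log_fact_le (m : ℕ) : Real.log m.factorial ≤ m * Real.log m := by
  rcases Nat.eq_zero_or_pos m with h | h
  · simp [h]
  have h1 : (m.factorial : ℝ) ≤ (m : ℝ) ^ m := by
    exact_mod_cast m.factorial_le_pow
  have h2 : Real.log m.factorial ≤ Real.log ((m : ℝ) ^ m) :=
    Real.log_le_log (by exact_mod_cast m.factorial_pos) h1
  rwa [Real.log_pow] at h2

private lemma log_fact_ge (m : ℕ) : (m : ℝ) * Real.log m - m ≤ Real.log m.factorial := by
  rcases Nat.eq_zero_or_pos m with h | h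
  · simp [h]
  have hm0 : (0:ℝ) < m := by exact_mod_cast h
  have hfact : (0:ℝ) < m.factorial := by exact_mod_cast m.factorial_pos
  have h1 : (m:ℝ)^m / m.factorial ≤ Real.exp m := by
    calc (m:ℝ)^m / m.factorial
        ≤ ∑ i ∈ Finset.range (m+1), (m:ℝ)^i / i.factorial := by
          exact Finset.single_le_sum (f := fun i => (m:ℝ)^i / i.factorial)
            (fun i _ => by positivity) (Finset.self_mem_range_succ m)
      _ ≤ Real.exp m := Real.sum_le_exp_of_nonneg (le_of_lt hm0) _
  have h2 : (m:ℝ)^m ≤ m.factorial * Real.exp m := by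
    rw [div_le_iff₀ hfact] at h1
    linarith [h1]
  have h3 : Real.log ((m:ℝ)^m) ≤ Real.log (m.factorial * Real.exp m) :=
    Real.log_le_log (by positivity) h2
  rw [Real.log_pow, Real.log_mul (ne_of_gt hfact) (Real.exp_ne_zero _), Real.log_exp] at h3
  linarith

private lemma gamma_upper (k : ℕ) {x : ℝ} (h1 : (k:ℝ)+1 ≤ x) (h2 : x ≤ (k:ℝ)+2) :
    Real.Gamma x ≤ ((k+1).factorial : ℝ) := by
  have hmem : x ∈ segment ℝ ((k:ℝ)+1) ((k:ℝ)+2) := by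
    rw [segment_eq_Icc (by linarith)]
    exact ⟨h1, h2⟩
  have hmax := Real.convexOn_Gamma.le_on_segment
    (Set.mem_Ioi.mpr (by positivity : (0:ℝ) < (k:ℝ)+1))
    (Set.mem_Ioi.mpr (by positivity : (0:ℝ) < (k:ℝ)+2)) hmem
  have e1 : Real.Gamma ((k:ℝ)+1) = (k.factorial : ℝ) := by
    exact_mod_cast Real.Gamma_nat_eq_factorial k
  have e2 : Real.Gamma ((k:ℝ)+2) = ((k+1).factorial : ℝ) := by
    have := Real.Gamma_nat_eq_factorial (k+1)
    push_cast at this ⊢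
    convert this using 2
    ring
  rw [e1, e2] at hmax
  refine hmax.trans (max_le ?_ le_rfl)
  exact_mod_cast Nat.factorial_le (Nat.le_succ k)

private lemma gamma_lower (k : ℕ) {x : ℝ} (h0 : 0 < x) (h1 : (k:ℝ)+1 ≤ x)
    (h2 : x < (k:ℝ)+2) :
    ((k+1).factorial : ℝ) / ((k:ℝ)+2) ≤ Real.Gamma x := by
  have e2 : Real.Gamma ((k:ℝ)+2) = ((k+1).factorial : ℝ) := by
    have := Real.Gamma_nat_eq_factorial (k+1)
    push_cast at this ⊢
    convert this using 2
    ring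
  have e3 : Real.Gamma ((k:ℝ)+3) = ((k+2).factorial : ℝ) := by
    have := Real.Gamma_nat_eq_factorial (k+2)
    push_cast at this ⊢
    convert this using 2
    ring
  have hs := Real.convexOn_log_Gamma.slope_mono_adjacent
    (Set.mem_Ioi.mpr h0) (Set.mem_Ioi.mpr (by positivity : (0:ℝ) < (k:ℝ)+3))
    h2 (by linarith : (k:ℝ)+2 < (k:ℝ)+3)
  simp only [Function.comp_apply] at hs
  rw [e2, e3] at hs
  have hd : (0:ℝ) < (k:ℝ)+2 - x := by linarith
  have hd1 : (k:ℝ)+2 - x ≤ 1 := by linarith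
  have hfe : ((k+2).factorial : ℝ) = ((k:ℝ)+2) * ((k+1).factorial : ℝ) := by
    push_cast [Nat.factorial_succ]
    ring
  have hk2pos : (0:ℝ) < (k:ℝ)+2 := by positivity
  have hf1pos : (0:ℝ) < ((k+1).factorial : ℝ) := by exact_mod_cast (k+1).factorial_pos
  have hslope : Real.log ((k+2).factorial : ℝ) - Real.log ((k+1).factorial : ℝ)
      = Real.log ((k:ℝ)+2) := by
    rw [hfe, Real.log_mul (ne_of_gt hk2pos) (ne_of_gt hf1pos)]
    ring
  have hk3 : ((k:ℝ)+3 - ((k:ℝ)+2)) = 1 := by ring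
  rw [hk3, div_one, hslope] at hs
  rw [div_le_iff₀ hd] at hs
  have hlogk2 : 0 ≤ Real.log ((k:ℝ)+2) := Real.log_nonneg (by linarith)
  have hkey : Real.log ((k+1).factorial : ℝ) - Real.log ((k:ℝ)+2)
      ≤ Real.log (Real.Gamma x) := by
    nlinarith [mul_le_of_le_one_right hlogk2 hd1]
  have hΓ : 0 < Real.Gamma x := Real.Gamma_pos_of_pos h0
  have hq : (0:ℝ) < ((k+1).factorial : ℝ) / ((k:ℝ)+2) := by positivity
  rw [← Real.exp_log hq, ← Real.exp_log hΓ]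
  apply Real.exp_le_exp.mpr
  rw [Real.log_div (ne_of_gt hf1pos) (ne_of_gt hk2pos)]
  exact hkey

/-- For every `a > 0` there exists `λ > 1` such that for all `n ≥ 1`,
`λ^{-n} (n!)^a ≤ Γ(an+1) ≤ λ^n (n!)^a`. -/
theorem gamma_factorial_comparison (a : ℝ) (ha : 0 < a) :
    ∃ l : ℝ, 1 < l ∧ ∀ n : ℕ, 1 ≤ n →
      (l ^ n)⁻¹ * ((n.factorial : ℝ) ^ a) ≤ Real.Gamma (a * n + 1) ∧
      Real.Gamma (a * n + 1) ≤ l ^ n * ((n.factorial : ℝ) ^ a) := by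
  set C : ℝ := (a+1) * Real.log (a+1) + a * |Real.log a| + 3*a + 4 with hCdef
  have hloga1 : 0 ≤ Real.log (a+1) := Real.log_nonneg (by linarith)
  have habs : 0 ≤ |Real.log a| := abs_nonneg _
  have hC : 0 < C := by
    have : 0 ≤ (a+1) * Real.log (a+1) := mul_nonneg (by linarith) hloga1
    have : 0 ≤ a * |Real.log a| := mul_nonneg ha.le habs
    nlinarith
  refine ⟨Real.exp C, ?_, ?_⟩
  · rw [show (1:ℝ) = Real.exp 0 by simp]
    exact Real.exp_lt_exp.mpr hC
  intro n hn
  set k : ℕ := Nat.floor (a * n) with hkdef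
  have hn1 : (1:ℝ) ≤ (n:ℝ) := by exact_mod_cast hn
  have han0 : (0:ℝ) ≤ a * n := by positivity
  have h1k : (k:ℝ) ≤ a * n := Nat.floor_le han0
  have h2k : a * (n:ℝ) < (k:ℝ) + 1 := Nat.lt_floor_add_one _
  have hkn : (k:ℝ) + 1 ≤ (a+1) * n := by nlinarith
  have hfpos : (0:ℝ) < (n.factorial : ℝ) := by exact_mod_cast n.factorial_pos
  have hlogn0 : 0 ≤ Real.log n := Real.log_nonneg hn1
  have hlogk0 : 0 ≤ Real.log ((k:ℝ)+1) := Real.log_nonneg (by linarith [Nat.cast_nonneg (α := ℝ) k])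
  have hlogn_le : Real.log n ≤ (n:ℝ) := by
    have := Real.log_le_sub_one_of_pos (by positivity : (0:ℝ) < (n:ℝ))
    linarith
  have hlogk2_le : Real.log ((k:ℝ)+2) ≤ (k:ℝ)+1 := by
    have := Real.log_le_sub_one_of_pos (by positivity : (0:ℝ) < (k:ℝ)+2)
    linarith
  have hFu : Real.log (n.factorial : ℝ) ≤ n * Real.log n := log_fact_le n
  have hFl : (n:ℝ) * Real.log n - n ≤ Real.log (n.factorial : ℝ) := log_fact_ge n
  have hKu : Real.log ((k+1).factorial : ℝ) ≤ ((k:ℝ)+1) * Real.log ((k:ℝ)+1) := by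
    have := log_fact_le (k+1)
    push_cast at this
    convert this using 3 <;> push_cast <;> ring
  have hKl : ((k:ℝ)+1) * Real.log ((k:ℝ)+1) - ((k:ℝ)+1) ≤ Real.log ((k+1).factorial : ℝ) := by
    have := log_fact_ge (k+1)
    push_cast at this
    convert this using 3 <;> push_cast <;> ring
  have hlogk1_le : Real.log ((k:ℝ)+1) ≤ Real.log (a+1) + Real.log n := by
    rw [← Real.log_mul (ne_of_gt (show (0:ℝ) < a+1 by linarith)) (ne_of_gt (show (0:ℝ) < (n:ℝ) by linarith))]
    exact Real.log_le_log (by positivity) hkn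
  -- Key upper inequality
  have UL : Real.log ((k+1).factorial : ℝ) ≤ n * C + a * Real.log (n.factorial : ℝ) := by
    have t1 : ((k:ℝ)+1) * Real.log ((k:ℝ)+1) ≤ (a*n+1) * (Real.log (a+1) + Real.log n) :=
      mul_le_mul (by linarith) hlogk1_le hlogk0 (by linarith)
    have t2 : (a*n+1) * Real.log (a+1) ≤ ((a+1)*n) * Real.log (a+1) :=
      mul_le_mul_of_nonneg_right (by nlinarith) hloga1
    have t3 : a * ((n:ℝ) * Real.log n - n) ≤ a * Real.log (n.factorial : ℝ) :=
      mul_le_mul_of_nonneg_left hFl ha.le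
    have hCn : n * C = n * ((a+1) * Real.log (a+1)) + n * (a * |Real.log a|)
        + n * (3*a) + n * 4 := by rw [hCdef]; ring
    have t4 : 0 ≤ n * (a * |Real.log a|) := by positivity
    nlinarith [mul_nonneg (show (0:ℝ) ≤ n by linarith) hlogn0]
  -- Key lower inequality
  have LL : a * Real.log (n.factorial : ℝ)
      ≤ n * C + Real.log ((k+1).factorial : ℝ) - Real.log ((k:ℝ)+2) := by
    have t3 : a * Real.log (n.factorial : ℝ) ≤ a * ((n:ℝ) * Real.log n) :=
      mul_le_mul_of_nonneg_left hFu ha.le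
    have main : a * ((n:ℝ) * Real.log n)
        ≤ ((k:ℝ)+1) * Real.log ((k:ℝ)+1) + n * (C - 2*(a+1)) := by
      have hC2 : C - 2*(a+1) = (a+1) * Real.log (a+1) + a * |Real.log a| + a + 2 := by
        rw [hCdef]; ring
      by_cases hcase : a * (n:ℝ) ≤ 1
      · have h1 : a * ((n:ℝ) * Real.log n) ≤ Real.log n := by
          have := mul_le_mul_of_nonneg_right hcase hlogn0
          nlinarith
        have h2 : 0 ≤ ((k:ℝ)+1) * Real.log ((k:ℝ)+1) := mul_nonneg (by positivity) hlogk0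
        have h3 : (2:ℝ) ≤ C - 2*(a+1) := by
          rw [hC2]
          nlinarith [mul_nonneg (show (0:ℝ) ≤ a+1 by linarith) hloga1,
            mul_nonneg ha.le habs]
        nlinarith
      · push_neg at hcase
        have hln : Real.log (a * n) ≤ Real.log ((k:ℝ)+1) :=
          Real.log_le_log (by positivity) (le_of_lt h2k)
        rw [Real.log_mul (ne_of_gt ha) (ne_of_gt (show (0:ℝ) < (n:ℝ) by linarith))] at hln
        have habs' : -|Real.log a| ≤ Real.log a := neg_abs_le _
        have hlognle : Real.log n ≤ Real.log ((k:ℝ)+1) + |Real.log a| := by linarith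
        have t5 : a * (n:ℝ) * Real.log n
            ≤ a * (n:ℝ) * (Real.log ((k:ℝ)+1) + |Real.log a|) :=
          mul_le_mul_of_nonneg_left hlognle (by positivity)
        have t6 : a * (n:ℝ) * Real.log ((k:ℝ)+1) ≤ ((k:ℝ)+1) * Real.log ((k:ℝ)+1) :=
          mul_le_mul_of_nonneg_right (by linarith) hlogk0
        have h3 : a * |Real.log a| + 2 ≤ C - 2*(a+1) := by
          rw [hC2]
          nlinarith [mul_nonneg (show (0:ℝ) ≤ a+1 by linarith) hloga1]
        nlinarith [mul_le_mul_of_nonneg_left h3 (show (0:ℝ) ≤ n by linarith)]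
    nlinarith
  have hx1 : (k:ℝ)+1 ≤ a*n+1 := by linarith
  have hx2 : a*n+1 < (k:ℝ)+2 := by linarith
  have hrpow : ((n.factorial : ℝ) ^ a) = Real.exp (Real.log (n.factorial : ℝ) * a) :=
    Real.rpow_def_of_pos hfpos a
  have hexpn : Real.exp C ^ n = Real.exp (n * C) := by
    rw [← Real.exp_nat_mul]
  constructor
  · -- lower bound
    refine le_trans ?_ (gamma_lower k (by positivity) hx1 hx2)
    rw [hrpow, hexpn, ← Real.exp_neg, ← Real.exp_add]
    have hq : (0:ℝ) < ((k+1).factorial : ℝ) / ((k:ℝ)+2) := by positivity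
    rw [← Real.exp_log hq]
    apply Real.exp_le_exp.mpr
    rw [Real.log_div (ne_of_gt (show (0:ℝ) < ((k+1).factorial : ℝ) by exact_mod_cast (k+1).factorial_pos)) (ne_of_gt (show (0:ℝ) < (k:ℝ)+2 by positivity))]
    linarith [LL]
  · -- upper bound
    refine (gamma_upper k hx1 (le_of_lt hx2)).trans ?_
    rw [hrpow, hexpn, ← Real.exp_add]
    have hf1pos : (0:ℝ) < ((k+1).factorial : ℝ) := by exact_mod_cast (k+1).factorial_pos
    rw [← Real.exp_log hf1pos]
    apply Real.exp_le_exp.mpr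
    linarith [UL]
end

section
/- Let δ = (α-d+2)/(2H) ∈ (0,1], H ∈ (1/2,1), t ∈ [0,T], h ∈ [0,1]. Then ((n-1)!/Γ((n-1)(1+δ)+1)) ∫_t^{t+h} (t+h-s)^δ s^{(n-1)(1+δ)} ds ≤ C^n (t+1)^{(n-1)(1+δ)} h^{δ+1} / ((n-1)!)^δ for a constant C depending only on δ. -/
/-!
Bounding `(t + h - s)^δ s^p` by its supremum `h^δ (t + 1)^p` on `[t, t + h]` leaves the factor
`(n-1)! / Γ((n-1)(1+δ)+1)`. With `m = n - 1` and `k = ⌊δ m⌋₊`, the elementary estimates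
`m!^δ ≤ (m+1)^(δ m) ≤ (m+1)^(k+1)` and `m! (m+1)^k ≤ (m+k)! ≤ Γ(m(1+δ)+1)` give
`m!^(1+δ) ≤ (m+1) Γ(m(1+δ)+1)`, so the factor is at most `2^n / ((n-1)!)^δ`.
-/

open Real intervalIntegral Nat

lemma Nat.factorial_le_Gamma_add_one {n : ℕ} {x : ℝ} (hn : (n : ℝ) ≤ x) (hx : 1 ≤ x) :
    (n ! : ℝ) ≤ Gamma (x + 1) := by
  -- `Γ` is only monotone on `[2, ∞)`, so `n = 0` is routed through `(max n 1)!`.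
  have hmono := Gamma_strictMonoOn_Ici.monotoneOn (a := (max n 1 : ℕ) + 1) (b := x + 1)
  have hmax : ((max n 1 : ℕ) : ℝ) ≤ x := by push_cast; exact max_le hn hx
  calc (n ! : ℝ) ≤ (max n 1)! := by exact_mod_cast factorial_le (le_max_left n 1)
    _ = Gamma ((max n 1 : ℕ) + 1) := (Gamma_nat_eq_factorial _).symm
    _ ≤ Gamma (x + 1) := by
      refine hmono ?_ (by simp only [Set.mem_Ici]; linarith) (by linarith)
      simp only [Set.mem_Ici]
      exact_mod_cast Nat.succ_le_succ (le_max_right n 1)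

lemma factorial_rpow_le_succ_pow_floor {δ : ℝ} (hδ : 0 ≤ δ) (m : ℕ) :
    (m ! : ℝ) ^ δ ≤ ((m : ℝ) + 1) ^ (⌊δ * m⌋₊ + 1) := by
  calc (m ! : ℝ) ^ δ ≤ (((m : ℝ) + 1) ^ m) ^ δ := by
        gcongr
        exact_mod_cast (factorial_le_pow m).trans (Nat.pow_le_pow_left m.le_succ m)
    _ = ((m : ℝ) + 1) ^ (δ * m) := by
        rw [← rpow_natCast, ← rpow_mul (by positivity), mul_comm]
    _ ≤ ((m : ℝ) + 1) ^ ((⌊δ * m⌋₊ : ℝ) + 1) :=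
        rpow_le_rpow_of_exponent_le (by linarith [m.cast_nonneg (α := ℝ)])
          (Nat.lt_floor_add_one _).le
    _ = ((m : ℝ) + 1) ^ (⌊δ * m⌋₊ + 1) := by norm_cast

lemma factorial_rpow_one_add_le_mul_Gamma {δ : ℝ} (hδ : 0 ≤ δ) (m : ℕ) :
    (m ! : ℝ) ^ (1 + δ) ≤ (m + 1) * Gamma (m * (1 + δ) + 1) := by
  rcases Nat.eq_zero_or_pos m with rfl | hm
  · simp
  set k := ⌊δ * m⌋₊
  have hm1 : (1 : ℝ) ≤ m := by exact_mod_cast hm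
  have hk : (k : ℝ) ≤ δ * m := Nat.floor_le (by positivity)
  have hGamma : ((m + k)! : ℝ) ≤ Gamma (m * (1 + δ) + 1) :=
    factorial_le_Gamma_add_one (by push_cast; linarith) (by nlinarith)
  calc (m ! : ℝ) ^ (1 + δ) = m ! * (m ! : ℝ) ^ δ := by
        rw [rpow_add (by positivity), rpow_one]
    _ ≤ m ! * ((m : ℝ) + 1) ^ (k + 1) := by gcongr; exact factorial_rpow_le_succ_pow_floor hδ m
    _ = (m + 1) * (m ! * ((m : ℝ) + 1) ^ k) := by ring
    _ ≤ (m + 1) * ((m + k)! : ℝ) := by gcongr; exact_mod_cast factorial_mul_pow_le_factorial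
    _ ≤ (m + 1) * Gamma (m * (1 + δ) + 1) := by gcongr

lemma factorial_div_Gamma_le {δ : ℝ} (hδ : 0 ≤ δ) (m : ℕ) :
    (m ! : ℝ) / Gamma (m * (1 + δ) + 1) ≤ 2 ^ (m + 1) / (m ! : ℝ) ^ δ := by
  have hfact : (0 : ℝ) < m ! := by exact_mod_cast m.factorial_pos
  rw [div_le_div_iff₀ (Gamma_pos_of_pos (by positivity)) (by positivity)]
  calc (m ! : ℝ) * (m ! : ℝ) ^ δ = (m ! : ℝ) ^ (1 + δ) := by rw [rpow_add hfact, rpow_one]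
    _ ≤ (m + 1) * Gamma (m * (1 + δ) + 1) := factorial_rpow_one_add_le_mul_Gamma hδ m
    _ ≤ 2 ^ (m + 1) * Gamma (m * (1 + δ) + 1) := by
        gcongr
        exact_mod_cast (Nat.lt_two_pow_self (n := m + 1)).le

lemma integral_sub_rpow_mul_rpow_le {t h δ p : ℝ} (ht : 0 ≤ t) (hh : 0 ≤ h) (hδ : 0 ≤ δ)
    (hp : 0 ≤ p) :
    ∫ s in t..(t + h), (t + h - s) ^ δ * s ^ p ≤ (t + h) ^ p * h ^ (δ + 1) := by
  have hbound : ∀ s ∈ Set.uIoc t (t + h), ‖(t + h - s) ^ δ * s ^ p‖ ≤ h ^ δ * (t + h) ^ p := by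
    intro s hs
    rw [Set.uIoc_of_le (by linarith)] at hs
    obtain ⟨hts, hst⟩ := hs
    have hs0 : 0 ≤ s := ht.trans hts.le
    rw [Real.norm_of_nonneg (by have := sub_nonneg.2 hst; positivity)]
    gcongr; linarith
  calc ∫ s in t..(t + h), (t + h - s) ^ δ * s ^ p
      ≤ ‖∫ s in t..(t + h), (t + h - s) ^ δ * s ^ p‖ := le_norm_self _
    _ ≤ h ^ δ * (t + h) ^ p * |t + h - t| := norm_integral_le_of_norm_le_const hbound
    _ = (t + h) ^ p * h ^ (δ + 1) := by
        rw [add_sub_cancel_left, abs_of_nonneg hh, rpow_add_one' hh (by linarith)]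
        ring

theorem time_increment_simplex_bound_general (δ : ℝ) (hδ : δ ∈ Set.Ioc (0 : ℝ) 1) :
    ∃ C : ℝ, 0 < C ∧ ∀ n : ℕ, 1 ≤ n → ∀ T : ℝ, 0 < T → ∀ t ∈ Set.Icc (0 : ℝ) T,
      ∀ h ∈ Set.Icc (0 : ℝ) 1,
      ((n - 1).factorial : ℝ) / Real.Gamma ((n - 1) * (1 + δ) + 1)
          * ∫ s in t..(t + h), (t + h - s) ^ δ * s ^ (((n : ℝ) - 1) * (1 + δ))
        ≤ C ^ n * (t + 1) ^ (((n : ℝ) - 1) * (1 + δ)) * h ^ (δ + 1)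
            / ((n - 1).factorial : ℝ) ^ δ := by
  have hδ0 : 0 ≤ δ := hδ.1.le
  refine ⟨2, two_pos, fun n hn T _ t ⟨ht, _⟩ h ⟨hh0, hh1⟩ => ?_⟩
  obtain ⟨m, rfl⟩ := Nat.exists_eq_add_of_le' hn
  have hcast : ((m + 1 : ℕ) : ℝ) - 1 = m := by push_cast; ring
  rw [hcast, Nat.add_sub_cancel]
  have hp : 0 ≤ (m : ℝ) * (1 + δ) := by positivity
  have hintegral : ∫ s in t..(t + h), (t + h - s) ^ δ * s ^ ((m : ℝ) * (1 + δ))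
      ≤ (t + 1) ^ ((m : ℝ) * (1 + δ)) * h ^ (δ + 1) :=
    (integral_sub_rpow_mul_rpow_le ht hh0 hδ0 hp).trans (by gcongr)
  calc (m ! : ℝ) / Gamma (m * (1 + δ) + 1)
          * ∫ s in t..(t + h), (t + h - s) ^ δ * s ^ ((m : ℝ) * (1 + δ))
      ≤ (m ! : ℝ) / Gamma (m * (1 + δ) + 1) * ((t + 1) ^ ((m : ℝ) * (1 + δ)) * h ^ (δ + 1)) :=
        mul_le_mul_of_nonneg_left hintegral (by positivity)
    _ ≤ 2 ^ (m + 1) / (m ! : ℝ) ^ δ * ((t + 1) ^ ((m : ℝ) * (1 + δ)) * h ^ (δ + 1)) :=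
        mul_le_mul_of_nonneg_right (factorial_div_Gamma_le hδ0 m) (by positivity)
    _ = _ := by ring

/-- For `H ∈ (1/2,1)`, `d-2 < α < d` and `δ = (α-d+2)/(2H) ∈ (0,1]`, there is a
constant `C > 0` depending only on `δ` such that for all `n ≥ 1`, `T > 0`,
`t ∈ [0,T]` and `h ∈ [0,1]`,
`((n-1)!/Γ((n-1)(1+δ)+1)) ∫_t^{t+h} (t+h-s)^δ s^{(n-1)(1+δ)} ds
  ≤ Cⁿ (t+1)^{(n-1)(1+δ)} h^{δ+1} / ((n-1)!)^δ`. -/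
theorem time_increment_simplex_bound (d : ℕ) (hd : 1 ≤ d) (α H δ : ℝ)
    (hH : H ∈ Set.Ioo (1/2 : ℝ) 1) (h1 : (d : ℝ) - 2 < α) (h2 : α < d)
    (hδdef : δ = (α - d + 2) / (2 * H)) (hδ : δ ∈ Set.Ioc (0 : ℝ) 1) :
    ∃ C : ℝ, 0 < C ∧ ∀ n : ℕ, 1 ≤ n → ∀ T : ℝ, 0 < T → ∀ t ∈ Set.Icc (0 : ℝ) T,
      ∀ h ∈ Set.Icc (0 : ℝ) 1,
      ((n - 1).factorial : ℝ) / Real.Gamma ((n - 1) * (1 + δ) + 1)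
          * ∫ s in t..(t + h), (t + h - s) ^ δ * s ^ (((n : ℝ) - 1) * (1 + δ))
        ≤ C ^ n * (t + 1) ^ (((n : ℝ) - 1) * (1 + δ)) * h ^ (δ + 1)
            / ((n - 1).factorial : ℝ) ^ δ :=
  time_increment_simplex_bound_general δ hδ
end
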